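/- For two nonempty compact convex sets V, O ⊆ ℝ², sd(V, O) = sup_{‖ẑ‖=1} inf_{x ∈ O, y ∈ V} ⟨ẑ, y − x⟩, i.e., the signed distance between the sets is the supremum over unit directions of the infimum of ⟨ẑ, y − x⟩ over pairs (x, y) ∈ O × V. -/

import Mathlib

open scoped RealInnerProductSpace

noncomputable def distSet (V O : Set (EuclideanSpace ℝ (Fin 2))) : ℝ :=
  sInf {r : ℝ | ∃ z : EuclideanSpace ℝ (Fin 2), r = ‖z‖ ∧
    (((fun v => v + z) '' V) ∩ O).Nonempty}

noncomputable def penSet (V O : Set (EuclideanSpace ℝ (Fin 2))) : ℝ :=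
  sInf {r : ℝ | ∃ z : EuclideanSpace ℝ (Fin 2), r = ‖z‖ ∧
    ¬(((fun v => v + z) '' V) ∩ O).Nonempty}

noncomputable def sd (V O : Set (EuclideanSpace ℝ (Fin 2))) : ℝ :=
  distSet V O - penSet V O

/-! Put `K = O - V`, a nonempty compact convex set. Then `distSet V O` and `penSet V O` are the
distances from `0` to `K` and to `Kᶜ`, at least one of which vanishes, and the inner infimum in
direction `u` is `-h_K(u)` for the support function `h_K`. Both cases come from the nearest-point
projection onto `K`: if `0 ∉ K`, the unit vector from the nearest point `p` towards `0` gives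
`-h_K(u) = ‖p‖`; if `0 ∈ K`, then `t • u ∉ K` for every `t > h_K(u)`, so the penetration depth is at
most `h_K(u)`, while every `z ∉ K` is separated from `K` by a unit `u` with `h_K(u) ≤ ‖z‖`. -/

open scoped Pointwise

open Set

lemma sInf_norm_image_eq_zero {E : Type*} [SeminormedAddCommGroup E] {s : Set E} (h : (0 : E) ∈ s) :
    sInf (norm '' s) = 0 :=
  le_antisymm (csInf_le ⟨0, forall_mem_image.2 fun _ _ => norm_nonneg _⟩ ⟨0, h, norm_zero⟩)
    (Real.sInf_nonneg (forall_mem_image.2 fun _ _ => norm_nonneg _))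

section SupportFunction

variable {F : Type*} [NormedAddCommGroup F] [InnerProductSpace ℝ F] {K : Set F} {u z : F}

noncomputable def supportFunction (K : Set F) (u : F) : ℝ :=
  sSup ((⟪u, ·⟫) '' K)

lemma inner_le_supportFunction (hK : IsCompact K) {w : F} (hw : w ∈ K) :
    ⟪u, w⟫ ≤ supportFunction K u :=
  le_csSup (hK.bddAbove_image (continuous_const.inner continuous_id).continuousOn)
    (mem_image_of_mem _ hw)

lemma supportFunction_le (hK : K.Nonempty) {c : ℝ} (h : ∀ w ∈ K, ⟪u, w⟫ ≤ c) :
    supportFunction K u ≤ c :=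
  csSup_le (hK.image _) (forall_mem_image.2 h)

/-- `p` is the point of `K` nearest to `z`, and `u` the unit vector from `p` towards `z`. -/
lemma exists_supportFunction_add_norm_le_inner (hKne : K.Nonempty) (hKc : IsCompact K)
    (hKconv : Convex ℝ K) (hz : z ∉ K) :
    ∃ u, ‖u‖ = 1 ∧ ∃ p ∈ K, supportFunction K u + ‖z - p‖ ≤ ⟪u, z⟫ := by
  obtain ⟨p, hpK, hp⟩ := exists_norm_eq_iInf_of_complete_convex hKne hKc.isComplete hKconv z
  have hobtuse := (norm_eq_iInf_iff_real_inner_le_zero hKconv hpK).1 hp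
  have hzp : 0 < ‖z - p‖ := norm_pos_iff.2 (sub_ne_zero.2 fun h => hz (h ▸ hpK))
  refine ⟨‖z - p‖⁻¹ • (z - p), by simp [norm_smul, hzp.ne'], p, hpK, ?_⟩
  refine le_sub_iff_add_le.1 (supportFunction_le hKne fun w hw => ?_)
  have hw_le : ⟪z - p, w⟫ ≤ ⟪z - p, z⟫ - ‖z - p‖ ^ 2 := by
    rw [← real_inner_self_eq_norm_sq, ← inner_sub_right, sub_sub_cancel]
    linarith [inner_sub_right (𝕜 := ℝ) (z - p) w p, hobtuse w hw]
  have := mul_le_mul_of_nonneg_left hw_le (inv_nonneg.2 hzp.le)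
  rwa [mul_sub, sq, ← mul_assoc, inv_mul_cancel₀ hzp.ne', one_mul, ← real_inner_smul_left,
    ← real_inner_smul_left] at this

lemma neg_supportFunction_le_sInf_norm (hKne : K.Nonempty) (hKc : IsCompact K) (hu : ‖u‖ = 1) :
    -supportFunction K u ≤ sInf (norm '' K) := by
  refine le_csInf (hKne.image _) (forall_mem_image.2 fun w hw => ?_)
  calc -supportFunction K u ≤ -⟪u, w⟫ := neg_le_neg (inner_le_supportFunction hKc hw)
    _ ≤ ‖u‖ * ‖w‖ := (neg_le_abs _).trans (abs_real_inner_le_norm u w)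
    _ = ‖w‖ := by rw [hu, one_mul]

lemma sInf_norm_compl_le_supportFunction (hKc : IsCompact K) (h0 : (0 : F) ∈ K) (hu : ‖u‖ = 1) :
    sInf (norm '' Kᶜ) ≤ supportFunction K u := by
  have hu' : ⟪u, u⟫ = 1 := by rw [real_inner_self_eq_norm_sq, hu, one_pow]
  have h0le : 0 ≤ supportFunction K u := by
    simpa using inner_le_supportFunction (u := u) hKc h0
  refine le_of_forall_gt_imp_ge_of_dense fun t ht => ?_
  have htK : t • u ∉ K := fun h => by
    have := inner_le_supportFunction (u := u) hKc h
    rw [real_inner_smul_right, hu', mul_one] at this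
    linarith
  calc sInf (norm '' Kᶜ) ≤ ‖t • u‖ :=
        csInf_le ⟨0, forall_mem_image.2 fun _ _ => norm_nonneg _⟩ (mem_image_of_mem _ htK)
    _ = t := by rw [norm_smul, hu, mul_one, Real.norm_of_nonneg (by linarith)]

lemma isGreatest_neg_supportFunction_of_zero_notMem (hKne : K.Nonempty) (hKc : IsCompact K)
    (hKconv : Convex ℝ K) (h0 : (0 : F) ∉ K) :
    IsGreatest {r | ∃ u, ‖u‖ = 1 ∧ r = -supportFunction K u} (sInf (norm '' K)) := by
  refine ⟨?_, fun _ ⟨u, hu, hr⟩ => hr ▸ neg_supportFunction_le_sInf_norm hKne hKc hu⟩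
  obtain ⟨u, hu, p, hpK, hsep⟩ := exists_supportFunction_add_norm_le_inner hKne hKc hKconv h0
  rw [zero_sub, norm_neg, inner_zero_right] at hsep
  have hp : sInf (norm '' K) ≤ ‖p‖ :=
    csInf_le ⟨0, forall_mem_image.2 fun _ _ => norm_nonneg _⟩ (mem_image_of_mem _ hpK)
  exact ⟨u, hu, le_antisymm (by linarith) (neg_supportFunction_le_sInf_norm hKne hKc hu)⟩

lemma isLUB_neg_supportFunction_of_zero_mem [Nontrivial F] (hKne : K.Nonempty)
    (hKc : IsCompact K) (hKconv : Convex ℝ K) (h0 : (0 : F) ∈ K) :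
    IsLUB {r | ∃ u, ‖u‖ = 1 ∧ r = -supportFunction K u} (-sInf (norm '' Kᶜ)) := by
  refine ⟨fun _ ⟨u, hu, hr⟩ => hr ▸ neg_le_neg (sInf_norm_compl_le_supportFunction hKc h0 hu),
    fun b hb => ?_⟩
  by_contra! hb_lt
  obtain ⟨_, ⟨z, hz, rfl⟩, hzb⟩ := exists_lt_of_csInf_lt
    ((nonempty_compl.2 hKc.ne_univ).image norm) (lt_neg_of_lt_neg hb_lt)
  obtain ⟨u, hu, p, -, hsep⟩ := exists_supportFunction_add_norm_le_inner hKne hKc hKconv hz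
  have hub : -supportFunction K u ≤ b := hb ⟨u, hu, rfl⟩
  have hinner : ⟪u, z⟫ ≤ ‖z‖ := by simpa [hu] using real_inner_le_norm u z
  linarith [norm_nonneg (z - p)]

theorem sSup_neg_supportFunction [Nontrivial F] (hKne : K.Nonempty) (hKc : IsCompact K)
    (hKconv : Convex ℝ K) :
    sSup {r | ∃ u, ‖u‖ = 1 ∧ r = -supportFunction K u} =
      sInf (norm '' K) - sInf (norm '' Kᶜ) := by
  by_cases h0 : (0 : F) ∈ K
  · obtain ⟨u, hu⟩ := exists_norm_eq F zero_le_one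
    rw [sInf_norm_image_eq_zero h0, zero_sub]
    exact (isLUB_neg_supportFunction_of_zero_mem hKne hKc hKconv h0).csSup_eq ⟨_, u, hu, rfl⟩
  · rw [sInf_norm_image_eq_zero (show (0 : F) ∈ Kᶜ from h0), sub_zero]
    exact (isGreatest_neg_supportFunction_of_zero_notMem hKne hKc hKconv h0).csSup_eq

end SupportFunction

lemma image_add_right_inter_nonempty_iff {G : Type*} [AddCommGroup G] {V O : Set G} {z : G} :
    (((fun v => v + z) '' V) ∩ O).Nonempty ↔ z ∈ O - V := by
  constructor
  · rintro ⟨_, ⟨y, hy, rfl⟩, hx⟩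
    exact ⟨y + z, hx, y, hy, add_sub_cancel_left y z⟩
  · rintro ⟨x, hx, y, hy, rfl⟩
    exact ⟨x, ⟨y, hy, add_sub_cancel y x⟩, hx⟩

lemma sInf_inner_sub_eq_neg_supportFunction {F : Type*} [NormedAddCommGroup F]
    [InnerProductSpace ℝ F] (V O : Set F) (u : F) :
    sInf {s : ℝ | ∃ x ∈ O, ∃ y ∈ V, s = ⟪u, y - x⟫} = -supportFunction (O - V) u := by
  rw [Real.sInf_def, supportFunction]
  congr 2
  ext s
  simp only [mem_neg, mem_ofPred_eq, mem_image, Set.mem_sub]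
  constructor
  · rintro ⟨x, hx, y, hy, hs⟩
    exact ⟨x - y, ⟨x, hx, y, hy, rfl⟩, by rw [← neg_sub, inner_neg_right, ← hs, neg_neg]⟩
  · rintro ⟨_, ⟨x, hx, y, hy, rfl⟩, rfl⟩
    exact ⟨x, hx, y, hy, by rw [← neg_sub x, inner_neg_right]⟩

lemma distSet_eq_sInf_norm (V O : Set (EuclideanSpace ℝ (Fin 2))) :
    distSet V O = sInf (norm '' (O - V)) := by
  unfold distSet
  congr 1
  ext r
  simp only [image_add_right_inter_nonempty_iff, mem_ofPred_eq, mem_image]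
  exact exists_congr fun z => by rw [eq_comm, and_comm]

lemma penSet_eq_sInf_norm (V O : Set (EuclideanSpace ℝ (Fin 2))) :
    penSet V O = sInf (norm '' (O - V)ᶜ) := by
  unfold penSet
  congr 1
  ext r
  simp only [image_add_right_inter_nonempty_iff, mem_ofPred_eq, mem_image, mem_compl_iff]
  exact exists_congr fun z => by rw [eq_comm, and_comm]

/-- for nonempty compact convex `V, O ⊆ ℝ²`,
`sd(V, O) = sup_{‖ẑ‖=1} inf_{x ∈ O, y ∈ V} ⟪ẑ, y − x⟫`. -/
theorem sd_eq_sup_inf (V O : Set (EuclideanSpace ℝ (Fin 2)))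
    (hVne : V.Nonempty) (hVc : IsCompact V) (hVconv : Convex ℝ V)
    (hOne : O.Nonempty) (hOc : IsCompact O) (hOconv : Convex ℝ O) :
    sd V O = sSup {r : ℝ | ∃ zhat : EuclideanSpace ℝ (Fin 2), ‖zhat‖ = 1 ∧
      r = sInf {s : ℝ | ∃ x ∈ O, ∃ y ∈ V, s = ⟪zhat, y - x⟫}} := by
  have hKc : IsCompact (O - V) := by
    rw [sub_eq_add_neg]
    exact hOc.add hVc.neg
  simp_rw [sInf_inner_sub_eq_neg_supportFunction]
  rw [sSup_neg_supportFunction (hOne.sub hVne) hKc (hOconv.sub hVconv), sd, distSet_eq_sInf_norm,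
    penSet_eq_sInf_norm]
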